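/- For every graph G of order n, the energy (trace norm) satisfies E(G) ≤ n(1 + √n)/2. -/

import Mathlib

open Finset

/-- Singular values (unsorted) of a complex matrix: square roots of eigenvalues of `A * Aᴴ`. -/
noncomputable def svalC {m n : ℕ} (A : Matrix (Fin m) (Fin n) ℂ) : Fin m → ℝ :=
  fun i => Real.sqrt ((Matrix.isHermitian_mul_conjTranspose_self A).eigenvalues i)

/-- Singular values of a complex matrix sorted in decreasing order. -/
noncomputable def svalCSorted {m n : ℕ} (A : Matrix (Fin m) (Fin n) ℂ) : Fin m → ℝ :=
  svalC A ∘ ⇑(Tuple.sort (fun i => -(svalC A i)))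

/-- Singular values (unsorted) of a real matrix. -/
noncomputable def svalR {m n : ℕ} (A : Matrix (Fin m) (Fin n) ℝ) : Fin m → ℝ :=
  fun i => Real.sqrt ((Matrix.isHermitian_mul_conjTranspose_self A).eigenvalues i)

/-- Singular values of a real matrix sorted in decreasing order. -/
noncomputable def svalRSorted {m n : ℕ} (A : Matrix (Fin m) (Fin n) ℝ) : Fin m → ℝ :=
  svalR A ∘ ⇑(Tuple.sort (fun i => -(svalR A i)))

/-- Ky Fan `k`-norm of a complex matrix: the sum of its `k` largest singular values. -/
noncomputable def kyFanC {m n : ℕ} (A : Matrix (Fin m) (Fin n) ℂ) (k : ℕ) : ℝ :=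
  ∑ i : Fin m, if (i : ℕ) < k then svalCSorted A i else 0

/-- Ky Fan `k`-norm of a real matrix. -/
noncomputable def kyFanR {m n : ℕ} (A : Matrix (Fin m) (Fin n) ℝ) (k : ℕ) : ℝ :=
  ∑ i : Fin m, if (i : ℕ) < k then svalRSorted A i else 0

/-- The adjacency matrix of a simple graph is Hermitian (over `ℝ`). -/
lemma adjHerm {n : ℕ} (G : SimpleGraph (Fin n)) [DecidableRel G.Adj] :
    (G.adjMatrix ℝ).IsHermitian := by
  have h := G.isSymm_adjMatrix (α := ℝ)
  exact (Matrix.conjTranspose_eq_transpose_of_trivial _).trans h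

/-- Singular values of a graph (unsorted). -/
noncomputable def gsval {n : ℕ} (G : SimpleGraph (Fin n)) [DecidableRel G.Adj] : Fin n → ℝ :=
  svalR (G.adjMatrix ℝ)

/-- Singular values of a graph sorted in decreasing order. -/
noncomputable def gsvalSorted {n : ℕ} (G : SimpleGraph (Fin n)) [DecidableRel G.Adj] : Fin n → ℝ :=
  svalRSorted (G.adjMatrix ℝ)

/-- Eigenvalues of a graph sorted in decreasing order: `geigSorted G 0 = μ₁ ≥ ⋯ ≥ μₙ`. -/
noncomputable def geigSorted {n : ℕ} (G : SimpleGraph (Fin n)) [DecidableRel G.Adj] : Fin n → ℝ :=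
  (adjHerm G).eigenvalues ∘ ⇑(Tuple.sort (fun i => -((adjHerm G).eigenvalues i)))

/-- Ky Fan `k`-norm of a graph. -/
noncomputable def kyFanG {n : ℕ} (G : SimpleGraph (Fin n)) [DecidableRel G.Adj] (k : ℕ) : ℝ :=
  kyFanR (G.adjMatrix ℝ) k

/-!
Write `sᵢ` for the singular values of a `0/1` matrix `A` of order `n` and `T = ∑ sᵢ² = ∑ᵢⱼ Aᵢⱼ`.
Testing `A Aᵀ` against the all-ones vector gives a singular value `q` with `T ≤ n q`, and Cauchy–Schwarz
bounds the other `n - 1` of them by `√((n - 1)(T - q²))`. Hence `∑ sᵢ ≤ q + √((n - 1)(n q - q²))`, and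
with `K = n(1 + √n)/2` the quadratic `(K - q)² - (n - 1)(n q - q²)` in `q` is a perfect square.
-/

open Matrix
open scoped ComplexOrder

lemma add_le_mul_one_add_sqrt_div_two {n T q R : ℝ} (hn : 1 ≤ n)
    (hR : R ^ 2 ≤ (n - 1) * (T - q ^ 2)) (hqT : q ^ 2 ≤ T) (hTq : T ≤ n * q) :
    q + R ≤ n * (1 + √n) / 2 := by
  set u := √n
  have hu : u ^ 2 = n := Real.sq_sqrt (by linarith)
  have hu1 : 1 ≤ u := Real.one_le_sqrt.2 hn
  have hqn : q ≤ n := by nlinarith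
  have hqK : 0 ≤ n * (1 + u) / 2 - q := by nlinarith
  have hsq : (n * (1 + u) / 2 - q) ^ 2 =
      (n - 1) * (n * q - q ^ 2) + n * (q - u * (1 + u) / 2) ^ 2 := by
    rw [← hu]; ring
  have hRK : R ^ 2 ≤ (n * (1 + u) / 2 - q) ^ 2 := by
    rw [hsq]
    nlinarith [sq_nonneg (q - u * (1 + u) / 2)]
  linarith [le_abs_self R, abs_le_of_sq_le_sq hRK hqK]

lemma sum_le_of_sum_sq_le_card_mul {ι : Type*} [Fintype ι] [DecidableEq ι] (s : ι → ℝ) (i₀ : ι)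
    (hs : ∑ i, s i ^ 2 ≤ Fintype.card ι * s i₀) :
    ∑ i, s i ≤ Fintype.card ι * (1 + √(Fintype.card ι)) / 2 := by
  have hmem := mem_univ i₀
  have hsq : ∑ i, s i ^ 2 = s i₀ ^ 2 + ∑ i ∈ univ.erase i₀, s i ^ 2 :=
    (add_sum_erase _ _ hmem).symm
  have hcard : (#(univ.erase i₀) : ℝ) = Fintype.card ι - 1 := by
    rw [card_erase_of_mem hmem, Nat.cast_sub (card_pos.2 ⟨i₀, hmem⟩), card_univ, Nat.cast_one]
  rw [← add_sum_erase _ _ hmem]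
  refine add_le_mul_one_add_sqrt_div_two ?_ ?_ ?_ hs
  · exact_mod_cast Fintype.card_pos_iff.2 ⟨i₀⟩
  · rw [hsq, add_sub_cancel_left, ← hcard]
    exact sq_sum_le_card_mul_sum_sq
  · rw [hsq]
    exact le_add_of_nonneg_right (sum_nonneg fun i _ ↦ sq_nonneg (s i))

namespace Matrix.IsHermitian

variable {n 𝕜 : Type*} [Fintype n] [DecidableEq n] [RCLike 𝕜] {A : Matrix n n 𝕜}

lemma posSemidef_smul_one_sub (hA : A.IsHermitian) {c : ℝ} (hc : ∀ i, hA.eigenvalues i ≤ c) :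
    ((c : 𝕜) • 1 - A).PosSemidef := by
  have hdiag : (c : 𝕜) • 1 - diagonal (RCLike.ofReal ∘ hA.eigenvalues) =
      diagonal (fun i ↦ ((c - hA.eigenvalues i : ℝ) : 𝕜)) := by
    rw [smul_one_eq_diagonal, diagonal_sub]
    congr 1
    ext i
    simp
  have hconj : (c : 𝕜) • 1 - A = Unitary.conjStarAlgAut 𝕜 _ hA.eigenvectorUnitary
      (diagonal (fun i ↦ ((c - hA.eigenvalues i : ℝ) : 𝕜))) := by
    conv_lhs => rw [hA.spectral_theorem]
    rw [← hdiag, map_sub, map_smul, map_one]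
  rw [hconj, Unitary.conjStarAlgAut_apply,
    Unitary.isUnit_coe.posSemidef_star_right_conjugate_iff, posSemidef_diagonal_iff]
  exact fun i ↦ RCLike.ofReal_nonneg.2 (sub_nonneg.2 (hc i))

lemma dotProduct_mulVec_le (hA : A.IsHermitian) {c : ℝ} (hc : ∀ i, hA.eigenvalues i ≤ c)
    (x : n → 𝕜) : star x ⬝ᵥ (A *ᵥ x) ≤ c * (star x ⬝ᵥ x) := by
  have := (hA.posSemidef_smul_one_sub hc).dotProduct_mulVec_nonneg x
  rwa [sub_mulVec, dotProduct_sub, smul_mulVec, one_mulVec, dotProduct_smul, smul_eq_mul,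
    sub_nonneg] at this

end Matrix.IsHermitian

section SingularValues

variable {m n : ℕ}

lemma svalR_sq (A : Matrix (Fin m) (Fin n) ℝ) (i : Fin m) :
    svalR A i ^ 2 = (isHermitian_mul_conjTranspose_self A).eigenvalues i :=
  Real.sq_sqrt (eigenvalues_self_mul_conjTranspose_nonneg A i)

lemma sum_svalR_sq (A : Matrix (Fin m) (Fin n) ℝ) :
    ∑ i, svalR A i ^ 2 = ∑ i, ∑ j, A i j ^ 2 := by
  have htrace := (isHermitian_mul_conjTranspose_self A).trace_eq_sum_eigenvalues
  simp only [RCLike.ofReal_real_eq_id, id_eq] at htrace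
  simp_rw [svalR_sq, ← htrace, trace, diag_apply, mul_apply, conjTranspose_apply, star_trivial, sq]

lemma exists_sq_sum_le_mul_svalR_sq [NeZero m] (A : Matrix (Fin m) (Fin n) ℝ) :
    ∃ i, (∑ i, ∑ j, A i j) ^ 2 ≤ m * n * svalR A i ^ 2 := by
  obtain ⟨i₀, hi₀⟩ := Finite.exists_max (isHermitian_mul_conjTranspose_self A).eigenvalues
  refine ⟨i₀, ?_⟩
  set ones : Fin m → ℝ := fun _ ↦ 1
  set colSum : Fin n → ℝ := ones ᵥ* A
  have hsum : ∑ i, ∑ j, A i j = ∑ j, colSum j := by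
    simp only [colSum, ones, vecMul, dotProduct, one_mul]
    exact sum_comm
  have hquad : star ones ⬝ᵥ ((A * Aᴴ) *ᵥ ones) = colSum ⬝ᵥ colSum := by
    rw [← mulVec_mulVec, dotProduct_mulVec, conjTranspose_eq_transpose_of_trivial,
      mulVec_transpose, star_trivial]
  have hones : star ones ⬝ᵥ ones = m := by simp [ones, dotProduct]
  have hray := (isHermitian_mul_conjTranspose_self A).dotProduct_mulVec_le hi₀ ones
  rw [hquad, hones, RCLike.ofReal_real_eq_id, id_eq] at hray
  have hcs : (∑ j, colSum j) ^ 2 ≤ n * (colSum ⬝ᵥ colSum) := by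
    simpa [dotProduct, ← sq] using sq_sum_le_card_mul_sum_sq (s := univ) (f := colSum)
  rw [hsum, svalR_sq]
  calc (∑ j, colSum j) ^ 2 ≤ n * (colSum ⬝ᵥ colSum) := hcs
    _ ≤ n * (_ * m) := by gcongr
    _ = _ := by ring

end SingularValues

theorem sum_svalR_le_of_sq_eq_self {n : ℕ} (A : Matrix (Fin n) (Fin n) ℝ)
    (hA : ∀ i j, A i j ^ 2 = A i j) : ∑ i, svalR A i ≤ n * (1 + √n) / 2 := by
  rcases n.eq_zero_or_pos with rfl | hn
  · simp
  have : NeZero n := ⟨hn.ne'⟩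
  obtain ⟨i₀, hi₀⟩ := exists_sq_sum_le_mul_svalR_sq A
  have hT : ∑ i, svalR A i ^ 2 ≤ n * svalR A i₀ := calc
    ∑ i, svalR A i ^ 2 = ∑ i, ∑ j, A i j := by simp only [sum_svalR_sq, hA]
    _ ≤ n * svalR A i₀ := (le_abs_self _).trans <| abs_le_of_sq_le_sq
        (by rwa [mul_pow, sq (n : ℝ)]) (mul_nonneg n.cast_nonneg (Real.sqrt_nonneg _))
  simpa using sum_le_of_sum_sq_le_card_mul (svalR A) i₀ (by simpa using hT)

/-- Koolen–Moulton absolute bound: `E(G) ≤ n(1 + √n)/2`. -/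
theorem energy_le_koolen_moulton {n : ℕ} (G : SimpleGraph (Fin n)) [DecidableRel G.Adj] :
    ∑ i, gsval G i ≤ (n : ℝ) * (1 + Real.sqrt n) / 2 :=
  sum_svalR_le_of_sq_eq_self _ fun i j ↦ by by_cases h : G.Adj i j <;> simp [h]
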